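/- Let I be an n×n black-white image, and let P₁, P₂ be neighboring pixels with P₁ black and P₂ white. Let S₁ be the shape of I containing P₁ and S₂ the shape containing P₂. Then P₁ ∈ B(S₁) or P₂ ∈ B(S₂). -/

import Mathlib

/-- A basic move on an `n×n` image: swap two adjacent rows or two adjacent columns. -/
def ImgMove {n : ℕ} {α : Type} (I I' : Fin n → Fin n → α) : Prop :=
  ∃ (x : Fin n) (h : x.val + 1 < n),
    I' = (fun i j => I (Equiv.swap x ⟨x.val + 1, h⟩ i) j) ∨
    I' = (fun i j => I i (Equiv.swap x ⟨x.val + 1, h⟩ j))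

/-- `MovesN R m a b`: `b` is obtained from `a` by exactly `m` `R`-steps. -/
def MovesN {β : Type} (R : β → β → Prop) : ℕ → β → β → Prop
  | 0 => fun a b => a = b
  | m + 1 => fun a c => ∃ b, R a b ∧ MovesN R m b c

/-- Normalized Hamming distance between two `n×n` images. -/
noncomputable def dHamImg {n : ℕ} {α : Type} (I I' : Fin n → Fin n → α) : ℝ :=
  (Nat.card {p : Fin n × Fin n // I p.1 p.2 ≠ I' p.1 p.2} : ℝ) / (n ^ 2)

/-- Two pixels are neighbors if they agree in one coordinate and differ by exactly `1`
in the other. -/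
def Nbr {n : ℕ} (P Q : Fin n × Fin n) : Prop :=
  (P.1 = Q.1 ∧ (P.2.val + 1 = Q.2.val ∨ Q.2.val + 1 = P.2.val)) ∨
  (P.2 = Q.2 ∧ (P.1.val + 1 = Q.1.val ∨ Q.1.val + 1 = P.1.val))

/-- The boundary of a black-white image (`true` = black, `false` = white): the set of
black pixels having a white neighbor. -/
def boundary {n : ℕ} (I : Fin n → Fin n → Bool) : Set (Fin n × Fin n) :=
  {P | I P.1 P.2 = true ∧ ∃ Q, Nbr P Q ∧ I Q.1 Q.2 = false}


/-- `l` is a path from `P` to `Q`: a nonempty list of pixels starting at `P`, ending at `Q`,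
in which consecutive pixels are neighbors. -/
def IsPath {n : ℕ} (l : List (Fin n × Fin n)) (P Q : Fin n × Fin n) : Prop :=
  l ≠ [] ∧ l.head? = some P ∧ l.getLast? = some Q ∧ l.Chain' Nbr

/-- The shape of the image `I` containing the pixel `P`: the connected component of `P`
among pixels of the same color, i.e. all pixels reachable from `P` by a monochromatic path. -/
def shapeOf {n : ℕ} (I : Fin n → Fin n → Bool) (P : Fin n × Fin n) :
    Set (Fin n × Fin n) :=
  {Q | ∃ l : List (Fin n × Fin n), IsPath l P Q ∧ ∀ R ∈ l, I R.1 R.2 = I P.1 P.2}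

/-- The outer pixel `(1,1)` (zero-based `(0,0)`). -/
def origin {n : ℕ} (hn : 0 < n) : Fin n × Fin n := (⟨0, hn⟩, ⟨0, hn⟩)

/-- The outer boundary `B(S)` of a set `S` of pixels: those `Q ∈ S` admitting a path from
the outer pixel to `Q` that does not intersect `S ∖ {Q}`. -/
def outerBdry {n : ℕ} (hn : 0 < n) (S : Set (Fin n × Fin n)) : Set (Fin n × Fin n) :=
  {Q | Q ∈ S ∧ ∃ l : List (Fin n × Fin n), IsPath l (origin hn) Q ∧ ∀ R ∈ l, R ∈ S → R = Q}


section Aux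

variable {n : ℕ}

/-- Connectivity within a set `A` via the neighbor relation. -/
def Conn (A : Set (Fin n × Fin n)) (P Q : Fin n × Fin n) : Prop :=
  Relation.ReflTransGen (fun x y => Nbr x y ∧ x ∈ A ∧ y ∈ A) P Q

theorem Nbr.symm' {P Q : Fin n × Fin n} (h : Nbr P Q) : Nbr Q P := by
  rcases h with ⟨h1, h2⟩ | ⟨h1, h2⟩
  · exact Or.inl ⟨h1.symm, h2.symm⟩
  · exact Or.inr ⟨h1.symm, h2.symm⟩

theorem Conn.mono {A B : Set (Fin n × Fin n)} (hAB : A ⊆ B) {P Q : Fin n × Fin n}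
    (h : Conn A P Q) : Conn B P Q :=
  Relation.ReflTransGen.mono (fun _ _ h => ⟨h.1, hAB h.2.1, hAB h.2.2⟩) _ _ h

theorem Conn.symm' {A : Set (Fin n × Fin n)} {P Q : Fin n × Fin n}
    (h : Conn A P Q) : Conn A Q P := by
  refine (@Relation.ReflTransGen.symmetric _ _ ⟨?_⟩).symm _ _ h
  intro x y ⟨h1, h2, h3⟩
  exact ⟨h1.symm', h3, h2⟩

theorem conn_to_path {A : Set (Fin n × Fin n)} {P Q : Fin n × Fin n}
    (hP : P ∈ A) (h : Conn A P Q) :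
    ∃ l, IsPath l P Q ∧ ∀ R ∈ l, R ∈ A := by
  induction h with
  | refl =>
    refine ⟨[P], ⟨by simp, rfl, rfl, List.isChain_singleton _⟩, ?_⟩
    intro R hR; simp at hR; subst hR; exact hP
  | @tail b c hPb hbc ih =>
    obtain ⟨l, ⟨hne, hhead, hlast, hchain⟩, hmem⟩ := ih
    refine ⟨l ++ [c], ⟨by simp, ?_, ?_, ?_⟩, ?_⟩
    · rw [List.head?_append_of_ne_nil _ hne]; exact hhead
    · simp [List.getLast?_concat]
    · unfold List.Chain'; rw [List.isChain_append]
      refine ⟨hchain, List.isChain_singleton _, ?_⟩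
      intro x hx y hy
      simp at hy; subst hy
      rw [hlast] at hx; simp at hx; subst hx
      exact hbc.1
    · intro R hR
      rcases List.mem_append.mp hR with h | h
      · exact hmem R h
      · simp at h; subst h; exact hbc.2.2

theorem path_to_conn {A : Set (Fin n × Fin n)} :
    ∀ (l : List (Fin n × Fin n)) (P Q : Fin n × Fin n),
    IsPath l P Q → (∀ R ∈ l, R ∈ A) → Conn A P Q := by
  intro l
  induction l with
  | nil => intro P Q h _; exact absurd rfl h.1
  | cons x t ih =>
    intro P Q ⟨_, hhead, hlast, hchain⟩ hmem
    simp at hhead; subst hhead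
    cases t with
    | nil =>
      simp [List.getLast?] at hlast; subst hlast
      exact Relation.ReflTransGen.refl
    | cons y s =>
      rw [List.getLast?_cons_cons] at hlast
      unfold List.Chain' at hchain; rw [List.isChain_cons_cons] at hchain
      have hyQ : Conn A y Q := by
        refine ih y Q ⟨by simp, rfl, hlast, hchain.2⟩ ?_
        intro R hR; exact hmem R (List.mem_cons_of_mem _ hR)
      exact Relation.ReflTransGen.head
        ⟨hchain.1, hmem x (by simp), hmem y (by simp)⟩ hyQ

theorem shape_iff_conn {I : Fin n → Fin n → Bool} {P Q : Fin n × Fin n} :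
    Q ∈ shapeOf I P ↔ Conn {R | I R.1 R.2 = I P.1 P.2} P Q := by
  constructor
  · rintro ⟨l, hl, hmem⟩
    exact path_to_conn l P Q hl hmem
  · intro h
    obtain ⟨l, hl, hmem⟩ :=
      conn_to_path (A := {R | I R.1 R.2 = I P.1 P.2}) rfl h
    exact ⟨l, hl, hmem⟩

theorem self_mem_shape {I : Fin n → Fin n → Bool} {P : Fin n × Fin n} :
    P ∈ shapeOf I P :=
  shape_iff_conn.mpr Relation.ReflTransGen.refl

theorem color_of_mem_shape {I : Fin n → Fin n → Bool} {P Q : Fin n × Fin n}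
    (h : Q ∈ shapeOf I P) : I Q.1 Q.2 = I P.1 P.2 := by
  rw [shape_iff_conn] at h
  induction h with
  | refl => rfl
  | tail _ hbc _ => exact hbc.2.2

/-- First-crossing lemma for `ReflTransGen`. -/
theorem cross {β : Type*} {r : β → β → Prop} {B : Set β} {a b : β}
    (h : Relation.ReflTransGen r a b) (ha : a ∈ B) (hb : b ∉ B) :
    ∃ x y, x ∈ B ∧ y ∉ B ∧ r x y ∧
      Relation.ReflTransGen (fun u v => r u v ∧ u ∈ B ∧ v ∈ B) a x := by
  revert ha
  induction h using Relation.ReflTransGen.head_induction_on with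
  | refl => intro ha; exact absurd ha hb
  | @head a c hac hcb ih =>
    intro ha
    by_cases hc : c ∈ B
    · obtain ⟨x, y, hx, hy, hr, hrest⟩ := ih hc
      exact ⟨x, y, hx, hy, hr, Relation.ReflTransGen.head ⟨hac, ha, hc⟩ hrest⟩
    · exact ⟨a, c, ha, hc, hac, Relation.ReflTransGen.refl⟩

theorem conn_col (hn : 0 < n) (i : Fin n) :
    ∀ m (h : m < n), Conn (Set.univ) (i, (⟨m, h⟩ : Fin n)) (i, ⟨0, hn⟩) := by
  intro m
  induction m with
  | zero => intro h; exact Relation.ReflTransGen.refl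
  | succ k ih =>
    intro h
    have hk : k < n := Nat.lt_of_succ_lt h
    refine Relation.ReflTransGen.head ?_ (ih hk)
    exact ⟨Or.inl ⟨rfl, Or.inr rfl⟩, trivial, trivial⟩

theorem conn_row (hn : 0 < n) (j : Fin n) :
    ∀ m (h : m < n), Conn (Set.univ) ((⟨m, h⟩ : Fin n), j) (⟨0, hn⟩, j) := by
  intro m
  induction m with
  | zero => intro h; exact Relation.ReflTransGen.refl
  | succ k ih =>
    intro h
    have hk : k < n := Nat.lt_of_succ_lt h
    refine Relation.ReflTransGen.head ?_ (ih hk)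
    exact ⟨Or.inr ⟨rfl, Or.inr rfl⟩, trivial, trivial⟩

theorem conn_to_origin (hn : 0 < n) (P : Fin n × Fin n) :
    Conn (Set.univ) P (origin hn) := by
  obtain ⟨⟨a, ha⟩, ⟨b, hb⟩⟩ := P
  exact (conn_col hn ⟨a, ha⟩ b hb).trans (conn_row hn ⟨0, hn⟩ a ha)

theorem conn_univ (hn : 0 < n) (P Q : Fin n × Fin n) : Conn (Set.univ) P Q :=
  (conn_to_origin hn P).trans (conn_to_origin hn Q).symm'

/-- Key auxiliary lemma: if `y` lies in the shape of `P₁`, and the origin connects to `y`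
avoiding both shapes (except `y` itself), then `P₂` is in the outer boundary of its shape. -/
theorem aux_bdry (hn : 0 < n) (I : Fin n → Fin n → Bool) (P₁ P₂ y : Fin n × Fin n)
    (hNbr : Nbr P₁ P₂) (hcol : I P₁.1 P₁.2 ≠ I P₂.1 P₂.2)
    (hy : y ∈ shapeOf I P₁)
    (hconn : Conn ((shapeOf I P₁ ∪ shapeOf I P₂)ᶜ ∪ {y}) (origin hn) y)
    (horig : origin hn ∈ (shapeOf I P₁ ∪ shapeOf I P₂)ᶜ ∪ {y}) :
    P₂ ∈ outerBdry hn (shapeOf I P₂) := by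
  set A : Set (Fin n × Fin n) := {R | R ∈ shapeOf I P₂ → R = P₂} with hA
  have hC1A : {R : Fin n × Fin n | I R.1 R.2 = I P₁.1 P₁.2} ⊆ A := by
    intro R hR hR2
    exact absurd (hR.symm.trans (color_of_mem_shape hR2)) hcol
  have hsub : (shapeOf I P₁ ∪ shapeOf I P₂)ᶜ ∪ {y} ⊆ A := by
    rintro R (hR | hR)
    · intro hR2; exact absurd (Or.inr hR2) hR
    · simp at hR; subst hR
      exact hC1A (color_of_mem_shape hy)
  have hP1A : P₁ ∈ A := hC1A rfl
  have hP2A : P₂ ∈ A := fun _ => rfl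
  have hyP1 : Conn A y P₁ :=
    ((shape_iff_conn.mp hy).symm').mono hC1A
  have hconnA : Conn A (origin hn) P₂ :=
    Relation.ReflTransGen.tail ((hconn.mono hsub).trans hyP1) ⟨hNbr, hP1A, hP2A⟩
  obtain ⟨l, hl, hmem⟩ := conn_to_path (hsub horig) hconnA
  exact ⟨self_mem_shape, l, hl, fun R hR => hmem R hR⟩

end Aux

/-- If `P₁` (black) and `P₂` (white) are neighboring pixels, with shapes `S₁` and `S₂`
respectively, then `P₁ ∈ B(S₁)` or `P₂ ∈ B(S₂)`. -/
theorem stmt11 {n : ℕ} (hn : 0 < n) (I : Fin n → Fin n → Bool)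
    (P₁ P₂ : Fin n × Fin n) (hNbr : Nbr P₁ P₂)
    (h1 : I P₁.1 P₁.2 = true) (h2 : I P₂.1 P₂.2 = false) :
    P₁ ∈ outerBdry hn (shapeOf I P₁) ∨ P₂ ∈ outerBdry hn (shapeOf I P₂) := by
  set S₁ := shapeOf I P₁ with hS₁
  set S₂ := shapeOf I P₂ with hS₂
  have hcol : I P₁.1 P₁.2 ≠ I P₂.1 P₂.2 := by rw [h1, h2]; simp
  -- Key step: find `y` in one of the shapes reachable from the origin
  -- avoiding both shapes except at `y`.
  have key : ∃ y, (y ∈ S₁ ∨ y ∈ S₂) ∧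
      Conn ((S₁ ∪ S₂)ᶜ ∪ {y}) (origin hn) y ∧
      origin hn ∈ (S₁ ∪ S₂)ᶜ ∪ {y} := by
    by_cases ho : origin hn ∈ S₁ ∪ S₂
    · exact ⟨origin hn, ho.imp id id, Relation.ReflTransGen.refl, Or.inr rfl⟩
    · have hrtg : Relation.ReflTransGen (fun x y : Fin n × Fin n => Nbr x y)
          (origin hn) P₂ :=
        Relation.ReflTransGen.mono (fun _ _ h => h.1) _ _ (conn_univ hn (origin hn) P₂)
      have hP2 : P₂ ∉ (S₁ ∪ S₂)ᶜ := by
        simp only [Set.mem_compl_iff, not_not]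
        exact Or.inr self_mem_shape
      obtain ⟨x, y, hx, hy, hr, hrest⟩ := cross hrtg ho hP2
      simp only [Set.mem_compl_iff, not_not] at hy
      refine ⟨y, hy, ?_, Or.inl ho⟩
      have hx' : Conn ((S₁ ∪ S₂)ᶜ ∪ {y}) (origin hn) x :=
        Conn.mono (Set.subset_union_left) hrest
      exact Relation.ReflTransGen.tail hx' ⟨hr, Or.inl hx, Or.inr rfl⟩
  obtain ⟨y, hy, hconn, horig⟩ := key
  rcases hy with hy | hy
  · exact Or.inr (aux_bdry hn I P₁ P₂ y hNbr hcol hy hconn horig)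
  · left
    rw [Set.union_comm S₁ S₂] at hconn horig
    exact aux_bdry hn I P₂ P₁ y hNbr.symm' (Ne.symm hcol) hy hconn horig
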